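/- arXiv:1902.11256 — 7 statements merged into one kernel-verified Lean document; each statement's English description precedes it below -/
import Mathlib

section
/- Let w = w_1⋯w_n be a fixed word over a finite alphabet 𝒜. Define φ_w mapping a non-commutative formal power series X to the (n+1)×(n+1) upper triangular matrix with φ_w(X)_{i,j} = coefficient of the subword w_i⋯w_{j−1} in X for i < j, φ_w(X)_{i,i} = coefficient of the empty word in X, and 0 for i > j. Then φ_w is an algebra homomorphism: it is ℂ-linear and satisfies φ_w(X·Y) = φ_w(X)·φ_w(Y). -/
open scoped BigOperators

namespace NC

/-- The multiplicative identity series (coefficient 1 on the empty word). -/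
noncomputable def one {α : Type*} : List α → ℂ
  | [] => 1
  | _ :: _ => 0

/-- Cauchy (convolution) product of noncommutative formal power series,
represented by their coefficient functions on words. -/
noncomputable def mul {α : Type*} (X Y : List α → ℂ) : List α → ℂ :=
  fun w => ∑ i ∈ Finset.range (w.length + 1), X (w.take i) * Y (w.drop i)

/-- Commutator `[X,Y] = XY - YX`. -/
noncomputable def lie {α : Type*} (X Y : List α → ℂ) : List α → ℂ := mul X Y - mul Y X

/-- Powers of a series. -/
noncomputable def pow {α : Type*} (X : List α → ℂ) : ℕ → (List α → ℂ)
  | 0 => one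
  | n + 1 => mul X (pow X n)

/-- The exponential series `∑ Xᵏ/k!`.  For `X` with zero constant term the
coefficient of a word `w` only receives contributions from `k ≤ length w`,
so this finite sum is the exact coefficient of `w` in `exp X`. -/
noncomputable def exp {α : Type*} (X : List α → ℂ) : List α → ℂ :=
  fun w => ∑ k ∈ Finset.range (w.length + 1), ((Nat.factorial k : ℂ))⁻¹ * pow X k w

/-- The generator `a` as a series. -/
noncomputable def gen {α : Type*} [DecidableEq α] (a : α) : List α → ℂ :=
  fun w => if w = [a] then 1 else 0

/-- Grade of a word: sum of the grades of its letters. -/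
def wgrade {α : Type*} (grade : α → ℕ) (w : List α) : ℕ := (w.map grade).sum

/-- Pure Lie elements of a given grade: generators, and brackets of pure elements. -/
inductive IsPure {α : Type*} [DecidableEq α] (grade : α → ℕ) :
    (List α → ℂ) → ℕ → Prop
  | gen (a : α) : IsPure grade (gen a) (grade a)
  | bracket {X Y : List α → ℂ} {k l : ℕ} :
      IsPure grade X k → IsPure grade Y l → IsPure grade (lie X Y) (k + l)

/-- The homogeneous component `𝔤ₖ` of the free Lie algebra: span of pure elements of grade `k`. -/
noncomputable def gk {α : Type*} [DecidableEq α] (grade : α → ℕ) (k : ℕ) :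
    Submodule ℂ (List α → ℂ) :=
  Submodule.span ℂ {X | IsPure grade X k}

/-- `ℛ_q`: series supported on words of grade `≥ q`. -/
def Rset {α : Type*} (grade : α → ℕ) (q : ℕ) : Set (List α → ℂ) :=
  {R | ∀ w : List α, wgrade grade w < q → R w = 0}

/-- Membership in the free Lie algebra `𝔤 = ⊕ₖ 𝔤ₖ`: a finite sum of homogeneous components. -/
def inLie {α : Type*} [DecidableEq α] (grade : α → ℕ) (Φ : List α → ℂ) : Prop :=
  ∃ (q : ℕ) (X : ℕ → List α → ℂ),
    (∀ k, 1 ≤ k → X k ∈ gk grade k) ∧ Φ = ∑ k ∈ Finset.Icc 1 q, X k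

/-- Product of the exponentials of a list of exponents. -/
noncomputable def prodExp {α : Type*} : List (List α → ℂ) → (List α → ℂ)
  | [] => one
  | X :: rest => mul (exp X) (prodExp rest)

/-- The scheme `exp(Φ_J)⋯exp(Φ_1)` associated with exponents `Φ_1, …, Φ_J`. -/
noncomputable def scheme {α : Type*} {J : ℕ} (Φ : Fin J → List α → ℂ) : List α → ℂ :=
  prodExp (List.ofFn Φ).reverse

/-- Lyndon words: nonempty and lexicographically strictly smaller than each proper right factor. -/
def Lyndon {α : Type*} [LT α] (w : List α) : Prop :=
  w ≠ [] ∧ ∀ i : ℕ, 0 < i → i < w.length → w < w.drop i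

/-- The matrix of coefficients of subwords of `w` in a series `X`. -/
noncomputable def phi {α : Type*} (w : List α) (X : List α → ℂ) :
    Matrix (Fin (w.length + 1)) (Fin (w.length + 1)) ℂ :=
  Matrix.of fun i j =>
    if (i : ℕ) < (j : ℕ) then X ((w.drop (i : ℕ)).take ((j : ℕ) - (i : ℕ)))
    else if (i : ℕ) = (j : ℕ) then X []
    else 0

end NC

/-!
A factor `w_{i:j-1}` of `w` splits as `w_{i:k-1} w_{k:j-1}` exactly at the cut points
`i ≤ k ≤ j`, so its coefficient in `XY` is the `(i, j)` entry of the product of the two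
upper triangular matrices `φ_w(X)` and `φ_w(Y)`; linearity holds entrywise.
-/

namespace List

variable {α : Type*}

theorem length_extract_of_le {l : List α} {i j : ℕ} (hj : j ≤ l.length) :
    (l.extract i j).length = j - i := by
  simp only [extract_eq_take_drop, length_take, length_drop]
  omega

theorem take_extract_of_le {l : List α} {i j t : ℕ} (ht : t ≤ j - i) :
    (l.extract i j).take t = l.extract i (i + t) := by
  simp only [extract_eq_take_drop, take_take, Nat.add_sub_cancel_left, min_eq_left ht]

theorem drop_extract (l : List α) (i j t : ℕ) :
    (l.extract i j).drop t = l.extract (i + t) j := by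
  simp only [extract_eq_take_drop, drop_take, drop_drop, Nat.sub_sub]

end List

theorem Fin.sum_ite_le_mul_ite_le {R : Type*} [NonUnitalNonAssocSemiring R] {n i j : ℕ}
    (f g : ℕ → ℕ → R) (hj : j ≤ n) :
    ∑ k : Fin (n + 1), (if i ≤ (k : ℕ) then f i k else 0) * (if (k : ℕ) ≤ j then g k j else 0) =
      ∑ k ∈ Finset.Icc i j, f i k * g k j := by
  simp_rw [ite_zero_mul_ite_zero]
  rw [Fin.sum_univ_eq_sum_range (fun k => if i ≤ k ∧ k ≤ j then f i k * g k j else 0),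
    ← Finset.sum_filter]
  congr 1
  ext k
  simp only [Finset.mem_filter, Finset.mem_range, Finset.mem_Icc]
  omega

namespace NC

variable {α : Type*}

/-- `w.extract i j` is the factor `w_{i:j-1}`; it is empty on the diagonal. -/
theorem phi_apply (w : List α) (X : List α → ℂ) (i j : Fin (w.length + 1)) :
    phi w X i j = if (i : ℕ) ≤ j then X (w.extract i j) else 0 := by
  simp only [phi, Matrix.of_apply, List.extract_eq_take_drop]
  rcases lt_trichotomy (i : ℕ) j with h | h | h
  · rw [if_pos h, if_pos h.le]
  · rw [if_neg h.not_lt, if_pos h, if_pos h.le, h, Nat.sub_self, List.take_zero]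
  · rw [if_neg h.not_gt, if_neg h.ne', if_neg h.not_ge]

theorem mul_extract (X Y : List α → ℂ) (w : List α) {i j : ℕ} (hij : i ≤ j)
    (hj : j ≤ w.length) :
    mul X Y (w.extract i j) = ∑ k ∈ Finset.Icc i j, X (w.extract i k) * Y (w.extract k j) := by
  rw [mul, List.length_extract_of_le hj, ← Finset.Ico_add_one_right_eq_Icc,
    Finset.sum_Ico_eq_sum_range, Nat.sub_add_comm hij]
  refine Finset.sum_congr rfl fun t ht => ?_
  rw [List.take_extract_of_le (Nat.lt_succ_iff.mp (Finset.mem_range.mp ht)), List.drop_extract]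

theorem phi_smul_add_smul (w : List α) (a b : ℂ) (X Y : List α → ℂ) :
    phi w (a • X + b • Y) = a • phi w X + b • phi w Y := by
  ext i j
  simp only [phi_apply, Matrix.add_apply, Matrix.smul_apply, Pi.add_apply, Pi.smul_apply,
    smul_eq_mul]
  split_ifs <;> ring

theorem phi_mul (w : List α) (X Y : List α → ℂ) :
    phi w (mul X Y) = phi w X * phi w Y := by
  ext i j
  have hj : (j : ℕ) ≤ w.length := Nat.lt_succ_iff.mp j.isLt
  simp only [Matrix.mul_apply, phi_apply]
  rw [Fin.sum_ite_le_mul_ite_le (fun k l => X (w.extract k l)) (fun k l => Y (w.extract k l)) hj]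
  split_ifs with hij
  · exact mul_extract X Y w hij hj
  · rw [Finset.Icc_eq_empty (by omega), Finset.sum_empty]

end NC

/-- For a fixed word `w` of length `n`, the map `φ_w` sending a
noncommutative formal power series `X` to the `(n+1)×(n+1)` upper triangular matrix of
coefficients of subwords of `w` is an algebra homomorphism: it is `ℂ`-linear and
sends the convolution product to the matrix product. -/
theorem phi_isAlgHom {α : Type*} (w : List α) :
    (∀ (a b : ℂ) (X Y : List α → ℂ),
        NC.phi w (a • X + b • Y) = a • NC.phi w X + b • NC.phi w Y) ∧
    (∀ X Y : List α → ℂ, NC.phi w (NC.mul X Y) = NC.phi w X * NC.phi w Y) :=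
  ⟨NC.phi_smul_add_smul w, NC.phi_mul w⟩
end

section
/- Let 𝔤 = ⊕_{k≥1} 𝔤_k be the graded free Lie algebra and Φ_1,…,Φ_J, Ω ∈ 𝔤 such that both S = exp(Φ_J)⋯exp(Φ_1) and exp(Ω) are self-adjoint. If S ≠ exp(Ω), then the minimal grade q such that S = exp(Ω) + Θ + R with 0 ≠ Θ ∈ 𝔤_q and R of grade ≥ q+1, is odd. -/
open scoped BigOperators

/-!
The map `adj` sending a word `w` to `(-1)^(grade w + |w|)` times its reversal is a linear
anti-automorphism of the series algebra. It fixes `one`, so it commutes with `exp` and reverses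
products of exponentials; on `𝔤ₖ` it is multiplication by `(-1)^(k+1)`. Hence it maps a scheme to
its adjoint and `exp Ω` to `exp Ω̃`. Applying it to `S = exp Ω + Θ + R`, where both `S` and
`exp Ω` are fixed, and comparing the components of grade `q` gives `Θ = (-1)^(q+1) Θ`; since
`Θ ≠ 0`, `q` is odd.
-/

namespace NC

variable {α : Type*}

lemma one_apply_of_ne_nil {w : List α} (h : w ≠ []) : one w = 0 := by
  cases w with
  | nil => exact absurd rfl h
  | cons a l => rfl

protected lemma mul_one (A : List α → ℂ) : mul A one = A := by
  funext w
  rw [mul, Finset.sum_eq_single_of_mem w.length (Finset.self_mem_range_succ _)]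
  · simp [one]
  · intro i hi hne
    rw [Finset.mem_range, Nat.lt_succ_iff] at hi
    have : w.drop i ≠ [] := by rw [Ne, List.drop_eq_nil_iff]; omega
    rw [one_apply_of_ne_nil this, mul_zero]

protected lemma one_mul (A : List α → ℂ) : mul one A = A := by
  funext w
  rw [mul, Finset.sum_eq_single_of_mem 0 (by simp)]
  · simp [one]
  · intro i _ hne
    have : w.take i ≠ [] := by
      cases w <;> simp_all
    rw [one_apply_of_ne_nil this, zero_mul]

lemma mul_mul_left_apply (A B C : List α → ℂ) (w : List α) :
    mul (mul A B) C w = ∑ j ∈ Finset.range (w.length + 1), ∑ i ∈ Finset.range (j + 1),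
      A (w.take i) * B ((w.drop i).take (j - i)) * C (w.drop j) := by
  refine Finset.sum_congr rfl fun j hj => ?_
  rw [Finset.mem_range, Nat.lt_succ_iff] at hj
  rw [mul, Finset.sum_mul, List.length_take, min_eq_left hj]
  refine Finset.sum_congr rfl fun i hi => ?_
  rw [Finset.mem_range, Nat.lt_succ_iff] at hi
  rw [List.take_take, min_eq_left hi, List.drop_take]

lemma mul_mul_right_apply (A B C : List α → ℂ) (w : List α) :
    mul A (mul B C) w = ∑ i ∈ Finset.range (w.length + 1), ∑ j ∈ Finset.Ico i (w.length + 1),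
      A (w.take i) * B ((w.drop i).take (j - i)) * C (w.drop j) := by
  refine Finset.sum_congr rfl fun i hi => ?_
  rw [Finset.mem_range, Nat.lt_succ_iff] at hi
  rw [mul, Finset.mul_sum, Finset.sum_Ico_eq_sum_range, List.length_drop,
    show w.length + 1 - i = w.length - i + 1 by omega]
  refine Finset.sum_congr rfl fun j _ => ?_
  rw [Nat.add_sub_cancel_left, List.drop_drop, mul_assoc]

protected lemma mul_assoc (A B C : List α → ℂ) : mul (mul A B) C = mul A (mul B C) := by
  funext w
  rw [mul_mul_left_apply, mul_mul_right_apply, ← Nat.Ico_zero_eq_range, Finset.sum_Ico_Ico_comm]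
  simp only [Nat.Ico_zero_eq_range]

protected lemma smul_mul_assoc (c : ℂ) (A B : List α → ℂ) : mul (c • A) B = c • mul A B := by
  funext w
  simp only [mul, Pi.smul_apply, smul_eq_mul, Finset.mul_sum, mul_assoc]

protected lemma mul_smul_comm (c : ℂ) (A B : List α → ℂ) : mul A (c • B) = c • mul A B := by
  funext w
  simp only [mul, Pi.smul_apply, smul_eq_mul, Finset.mul_sum, mul_left_comm]

protected lemma pow_succ (X : List α → ℂ) (n : ℕ) : pow X (n + 1) = mul (pow X n) X := by
  induction n with
  | zero => exact (NC.mul_one X).trans (NC.one_mul X).symm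
  | succ n ih =>
    change mul X (pow X (n + 1)) = mul (mul X (pow X n)) X
    rw [ih, NC.mul_assoc]

lemma prodExp_append_singleton (L : List (List α → ℂ)) (Y : List α → ℂ) :
    prodExp (L ++ [Y]) = mul (prodExp L) (exp Y) := by
  induction L with
  | nil => exact (NC.mul_one _).trans (NC.one_mul _).symm
  | cons X L ih =>
    change mul (exp X) (prodExp (L ++ [Y])) = mul (mul (exp X) (prodExp L)) (exp Y)
    rw [ih, NC.mul_assoc]

lemma wgrade_take_add_wgrade_drop (grade : α → ℕ) (w : List α) (i : ℕ) :
    wgrade grade (w.take i) + wgrade grade (w.drop i) = wgrade grade w := by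
  rw [wgrade, wgrade, wgrade, ← List.sum_append, ← List.map_append, List.take_append_drop]

lemma wgrade_reverse (grade : α → ℕ) (w : List α) :
    wgrade grade w.reverse = wgrade grade w := by
  rw [wgrade, wgrade, List.map_reverse, List.sum_reverse]

def homogeneous (grade : α → ℕ) (k : ℕ) : Submodule ℂ (List α → ℂ) where
  carrier := {X | ∀ w, wgrade grade w ≠ k → X w = 0}
  zero_mem' _ _ := rfl
  add_mem' hX hY w hw := by simp [hX w hw, hY w hw]
  smul_mem' c X hX w hw := by simp [hX w hw]

lemma mul_mem_homogeneous {grade : α → ℕ} {X Y : List α → ℂ} {k l : ℕ}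
    (hX : X ∈ homogeneous grade k) (hY : Y ∈ homogeneous grade l) :
    mul X Y ∈ homogeneous grade (k + l) := by
  intro w hw
  refine Finset.sum_eq_zero fun i _ => ?_
  by_cases h : wgrade grade (w.take i) = k
  · have : wgrade grade (w.drop i) ≠ l := by
      rw [← wgrade_take_add_wgrade_drop grade w i, h] at hw
      omega
    rw [hY _ this, mul_zero]
  · rw [hX _ h, zero_mul]

lemma IsPure.mem_homogeneous {grade : α → ℕ} [DecidableEq α] {Z : List α → ℂ} {k : ℕ}
    (h : IsPure grade Z k) : Z ∈ homogeneous grade k := by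
  induction h with
  | gen a =>
    intro w hw
    have : w ≠ [a] := by
      rintro rfl
      simp [wgrade] at hw
    simp only [NC.gen, this, if_false]
  | @bracket X Y k l _ _ ihX ihY =>
    refine sub_mem (mul_mem_homogeneous ihX ihY) ?_
    rw [add_comm]
    exact mul_mem_homogeneous ihY ihX

lemma mem_homogeneous_of_mem_gk {grade : α → ℕ} [DecidableEq α] {Z : List α → ℂ} {k : ℕ}
    (h : Z ∈ gk grade k) : Z ∈ homogeneous grade k :=
  Submodule.span_le.2 (fun _ hZ => IsPure.mem_homogeneous hZ) h

lemma eq_of_add_eq_add_of_mem_gk {grade : α → ℕ} [DecidableEq α] {q : ℕ}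
    {Θ₁ Θ₂ R₁ R₂ : List α → ℂ} (hΘ₁ : Θ₁ ∈ gk grade q) (hΘ₂ : Θ₂ ∈ gk grade q)
    (hR₁ : R₁ ∈ Rset grade (q + 1)) (hR₂ : R₂ ∈ Rset grade (q + 1))
    (h : Θ₁ + R₁ = Θ₂ + R₂) : Θ₁ = Θ₂ := by
  funext w
  by_cases hw : wgrade grade w = q
  · simpa [hR₁ w (by omega), hR₂ w (by omega)] using congrFun h w
  · rw [mem_homogeneous_of_mem_gk hΘ₁ w hw, mem_homogeneous_of_mem_gk hΘ₂ w hw]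

/-- On a letter `a` the sign is `(-1)^(grade a + 1)`, the tilde on `𝔤_(grade a)`. -/
noncomputable def adj (grade : α → ℕ) : (List α → ℂ) →ₗ[ℂ] (List α → ℂ) where
  toFun A w := (-1 : ℂ) ^ (wgrade grade w + w.length) * A w.reverse
  map_add' A B := by funext w; simp [mul_add]
  map_smul' c A := by funext w; simp [mul_left_comm]

variable (grade : α → ℕ)

lemma adj_apply (A : List α → ℂ) (w : List α) :
    adj grade A w = (-1 : ℂ) ^ (wgrade grade w + w.length) * A w.reverse := rfl

lemma neg_one_pow_take_mul_drop (w : List α) {i : ℕ} (hi : i ≤ w.length) :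
    (-1 : ℂ) ^ (wgrade grade (w.take i) + (w.take i).length) *
      (-1 : ℂ) ^ (wgrade grade (w.drop i) + (w.drop i).length)
      = (-1 : ℂ) ^ (wgrade grade w + w.length) := by
  rw [← pow_add, ← wgrade_take_add_wgrade_drop grade w i, List.length_take, List.length_drop,
    min_eq_left hi]
  congr 1
  omega

lemma adj_one : adj grade (one : List α → ℂ) = one := by
  funext w
  cases w with
  | nil => simp [adj_apply, one, wgrade]
  | cons a l => rw [adj_apply, one_apply_of_ne_nil (by simp), one_apply_of_ne_nil (by simp),
      mul_zero]

lemma adj_mul (A B : List α → ℂ) : adj grade (mul A B) = mul (adj grade B) (adj grade A) := by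
  funext w
  simp only [adj_apply, mul, List.length_reverse, Finset.mul_sum]
  rw [← Finset.sum_range_reflect]
  refine Finset.sum_congr rfl fun i hi => ?_
  rw [Finset.mem_range, Nat.lt_succ_iff] at hi
  rw [Nat.add_sub_cancel, List.reverse_take, List.reverse_drop,
    ← neg_one_pow_take_mul_drop grade w hi]
  ring

lemma adj_pow (X : List α → ℂ) (n : ℕ) : adj grade (pow X n) = pow (adj grade X) n := by
  induction n with
  | zero => exact adj_one grade
  | succ n ih =>
    change adj grade (mul X (pow X n)) = _
    rw [adj_mul, ih, NC.pow_succ]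

lemma adj_exp (X : List α → ℂ) : adj grade (exp X) = exp (adj grade X) := by
  funext w
  simp only [adj_apply, exp, List.length_reverse, Finset.mul_sum, ← adj_pow]
  exact Finset.sum_congr rfl fun _ _ => mul_left_comm _ _ _

lemma adj_prodExp (L : List (List α → ℂ)) :
    adj grade (prodExp L) = prodExp (L.reverse.map (adj grade)) := by
  induction L with
  | nil => exact adj_one grade
  | cons X L ih =>
    change adj grade (mul (exp X) (prodExp L)) = _
    rw [adj_mul, ih, adj_exp, List.reverse_cons, List.map_append, List.map_singleton,
      prodExp_append_singleton]

lemma adj_scheme {J : ℕ} (Φ : Fin J → List α → ℂ) :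
    adj grade (scheme Φ) = prodExp (List.ofFn fun j => adj grade (Φ j)) := by
  rw [scheme, adj_prodExp, List.reverse_reverse, List.map_ofFn]
  rfl

lemma adj_mem_Rset {q : ℕ} {R : List α → ℂ} (hR : R ∈ Rset grade q) :
    adj grade R ∈ Rset grade q := fun w hw => by
  rw [adj_apply, hR w.reverse (by rwa [wgrade_reverse]), mul_zero]

variable [DecidableEq α] {grade}

lemma IsPure.adj_eq {Z : List α → ℂ} {k : ℕ} (h : IsPure grade Z k) :
    adj grade Z = (-1 : ℂ) ^ (k + 1) • Z := by
  induction h with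
  | gen a =>
    funext w
    by_cases hw : w = [a]
    · subst hw
      simp [adj_apply, NC.gen, wgrade]
    · have : w.reverse ≠ [a] := fun h => hw (List.reverse_eq_cons_iff.mp h)
      simp [adj_apply, NC.gen, hw, this]
  | @bracket X Y k l _ _ ihX ihY =>
    have hsign : (-1 : ℂ) ^ (l + 1 + (k + 1)) = -(-1) ^ (k + l + 1) := by ring
    rw [lie, map_sub, adj_mul, adj_mul, ihX, ihY, NC.smul_mul_assoc, NC.mul_smul_comm,
      NC.smul_mul_assoc, NC.mul_smul_comm, smul_smul, smul_smul, ← pow_add, ← pow_add,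
      add_comm (k + 1), hsign, neg_smul, neg_smul, sub_neg_eq_add, neg_add_eq_sub, smul_sub]

lemma adj_of_mem_gk {Z : List α → ℂ} {k : ℕ} (h : Z ∈ gk grade k) :
    adj grade Z = (-1 : ℂ) ^ (k + 1) • Z := by
  induction h using Submodule.span_induction with
  | mem x hx => exact hx.adj_eq
  | zero => rw [map_zero, smul_zero]
  | add x y _ _ ihx ihy => rw [map_add, ihx, ihy, smul_add]
  | smul c x _ ih => rw [map_smul, ih, smul_comm]

lemma adj_sum_of_mem_gk {s : Finset ℕ} {X : ℕ → List α → ℂ} (hX : ∀ k ∈ s, X k ∈ gk grade k) :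
    adj grade (∑ k ∈ s, X k) = ∑ k ∈ s, (-1 : ℂ) ^ (k + 1) • X k := by
  rw [map_sum]
  exact Finset.sum_congr rfl fun k hk => adj_of_mem_gk (hX k hk)

end NC

theorem selfadjoint_leading_error_odd_grade_general {α : Type*} [DecidableEq α]
    (grade : α → ℕ)
    (J K : ℕ) (X : Fin J → ℕ → List α → ℂ)
    (hX : ∀ j k, 1 ≤ k → k ≤ K → X j k ∈ NC.gk grade k)
    (Y : ℕ → List α → ℂ)
    (hY : ∀ k, 1 ≤ k → k ≤ K → Y k ∈ NC.gk grade k)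
    -- the scheme is self-adjoint: it equals its adjoint (reversed order, tilded exponents)
    (hSselfadj : NC.scheme (fun j => ∑ k ∈ Finset.Icc 1 K, X j k)
        = NC.prodExp (List.ofFn fun j => ∑ k ∈ Finset.Icc 1 K, ((-1 : ℂ)) ^ (k + 1) • X j k))
    -- `exp Ω` is self-adjoint: `Ω̃ = Ω`
    (hΩselfadj : (∑ k ∈ Finset.Icc 1 K, ((-1 : ℂ)) ^ (k + 1) • Y k)
        = ∑ k ∈ Finset.Icc 1 K, Y k)
    (q : ℕ) (Θ R : List α → ℂ)
    (hΘ : Θ ∈ NC.gk grade q) (hΘne : Θ ≠ 0) (hR : R ∈ NC.Rset grade (q + 1))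
    (heq : NC.scheme (fun j => ∑ k ∈ Finset.Icc 1 K, X j k)
        = NC.exp (∑ k ∈ Finset.Icc 1 K, Y k) + Θ + R) :
    Odd q := by
  have hS : NC.adj grade (NC.scheme fun j => ∑ k ∈ Finset.Icc 1 K, X j k)
      = NC.scheme fun j => ∑ k ∈ Finset.Icc 1 K, X j k := by
    rw [NC.adj_scheme, hSselfadj]
    congr 2
    funext j
    exact NC.adj_sum_of_mem_gk fun k hk => hX j k (Finset.mem_Icc.1 hk).1 (Finset.mem_Icc.1 hk).2
  have hΩ : NC.adj grade (NC.exp (∑ k ∈ Finset.Icc 1 K, Y k))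
      = NC.exp (∑ k ∈ Finset.Icc 1 K, Y k) := by
    rw [NC.adj_exp, NC.adj_sum_of_mem_gk fun k hk =>
      hY k (Finset.mem_Icc.1 hk).1 (Finset.mem_Icc.1 hk).2, hΩselfadj]
  have hlead : Θ = (-1 : ℂ) ^ (q + 1) • Θ := by
    have h := congrArg (NC.adj grade) heq
    rw [hS, heq, map_add, map_add, hΩ, NC.adj_of_mem_gk hΘ, add_assoc, add_assoc] at h
    exact NC.eq_of_add_eq_add_of_mem_gk hΘ (Submodule.smul_mem _ _ hΘ) hR
      (NC.adj_mem_Rset grade hR) (add_left_cancel h)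
  by_contra hq
  rw [Nat.not_odd_iff_even] at hq
  rw [hq.add_one.neg_one_pow, neg_one_smul] at hlead
  exact hΘne (funext fun w => CharZero.eq_neg_self_iff.mp (congrFun hlead w))

/-- (Theorem 2 of the paper.)  If both the scheme
`S = exp(Φ_J)⋯exp(Φ₁)` (with `Φ_j = ∑_{k=1}^K X_{j,k}`, `X_{j,k} ∈ 𝔤ₖ`) and `exp(Ω)`
are self-adjoint, and `S ≠ exp(Ω)`, then the grade `q` of the leading error term
(`S = exp(Ω) + Θ + R` with `0 ≠ Θ ∈ 𝔤_q`, `R ∈ ℛ_{q+1}`) is odd.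
The adjoint of `exp(Φ_J)⋯exp(Φ₁)` is `exp(Φ̃₁)⋯exp(Φ̃_J)` with
`Φ̃ = ∑_k (−1)^{k+1} X_k`; self-adjointness of `exp Ω` means `Ω̃ = Ω`. -/
theorem selfadjoint_leading_error_odd_grade {α : Type*} [DecidableEq α] [Fintype α]
    (grade : α → ℕ) (hpos : ∀ a, 0 < grade a)
    (J K : ℕ) (X : Fin J → ℕ → List α → ℂ)
    (hX : ∀ j k, 1 ≤ k → k ≤ K → X j k ∈ NC.gk grade k)
    (Y : ℕ → List α → ℂ)
    (hY : ∀ k, 1 ≤ k → k ≤ K → Y k ∈ NC.gk grade k)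
    -- the scheme is self-adjoint: it equals its adjoint (reversed order, tilded exponents)
    (hSselfadj : NC.scheme (fun j => ∑ k ∈ Finset.Icc 1 K, X j k)
        = NC.prodExp (List.ofFn fun j => ∑ k ∈ Finset.Icc 1 K, ((-1 : ℂ)) ^ (k + 1) • X j k))
    -- `exp Ω` is self-adjoint: `Ω̃ = Ω`
    (hΩselfadj : (∑ k ∈ Finset.Icc 1 K, ((-1 : ℂ)) ^ (k + 1) • Y k)
        = ∑ k ∈ Finset.Icc 1 K, Y k)
    (hne : NC.scheme (fun j => ∑ k ∈ Finset.Icc 1 K, X j k)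
        ≠ NC.exp (∑ k ∈ Finset.Icc 1 K, Y k))
    (q : ℕ) (Θ R : List α → ℂ)
    (hΘ : Θ ∈ NC.gk grade q) (hΘne : Θ ≠ 0) (hR : R ∈ NC.Rset grade (q + 1))
    (heq : NC.scheme (fun j => ∑ k ∈ Finset.Icc 1 K, X j k)
        = NC.exp (∑ k ∈ Finset.Icc 1 K, Y k) + Θ + R) :
    Odd q :=
  selfadjoint_leading_error_odd_grade_general grade J K X hX Y hY hSselfadj hΩselfadj q Θ R hΘ hΘne
    hR heq
end

section
/- For a Lyndon word w with right standard factorization w = uv (v the longest proper right factor of w that is Lyndon), u is also a Lyndon word. -/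
open scoped BigOperators

/-! The longest proper Lyndon suffix `v` of `w` is also its lexicographically least nonempty proper
suffix: the least one is itself Lyndon (its suffixes are suffixes of `w`), hence no longer than `v`,
hence a suffix of `v` and so `≥ v`. Now let `s` be a proper suffix of `u`; as `w` is Lyndon,
`u v < s v`. If `s` is not a prefix of `u`, this comparison is decided inside `u`, giving `u < s`.
If `u = s t`, cancelling `s` gives `t v < v` with `t v` a proper suffix of `w`, contradicting the
minimality of `v`. -/

namespace List

variable {α : Type*}

theorem append_lt_append_left_iff [LT α] [Std.Irrefl (· < · : α → α → Prop)] (s : List α)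
    {x y : List α} : s ++ x < s ++ y ↔ x < y := by
  induction s with
  | nil => rfl
  | cons a s ih => exact cons_lt_cons_self.trans ih

theorem lt_of_append_lt_append_of_not_isPrefix [LT α] :
    ∀ {u s : List α} (c d : List α), s.length ≤ u.length → ¬ s <+: u → u ++ c < s ++ d → u < s
  | _, [], _, _, _, hpre, _ => absurd nil_prefix hpre
  | [], _ :: _, _, _, hlen, _, _ => absurd hlen (by simp)
  | _ :: _, _ :: _, c, d, hlen, hpre, h => by
    cases h with
    | rel hr => exact Lex.rel hr
    | cons h =>
      refine Lex.cons (lt_of_append_lt_append_of_not_isPrefix c d (by simpa using hlen) ?_ h)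
      exact fun hp => hpre (cons_prefix_cons.2 ⟨rfl, hp⟩)

end List

namespace NC

open List

variable {α : Type*} [LinearOrder α]

theorem Lyndon.le_of_isSuffix {x s : List α} (hx : Lyndon x) (hs : s <:+ x) (hs0 : s ≠ []) :
    x ≤ s := by
  obtain ⟨t, rfl⟩ := hs
  rcases eq_or_ne t [] with rfl | ht
  · exact le_rfl
  · have hlt := hx.2 t.length (length_pos_iff.2 ht)
      (by simpa using length_pos_iff.2 hs0)
    rw [drop_left] at hlt
    exact hlt.le

theorem exists_lyndon_isSuffix_le {w z : List α} (hz : z <:+ w) (hzw : z ≠ w) (hz0 : z ≠ []) :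
    ∃ m, m <:+ w ∧ m ≠ w ∧ Lyndon m ∧ m ≤ z := by
  set S := w.tails.toFinset.filter (fun s => s ≠ [] ∧ s ≠ w)
  have hmemS : ∀ {s}, s ∈ S ↔ s <:+ w ∧ s ≠ [] ∧ s ≠ w := by simp [S]
  obtain ⟨m, hmS, hmin⟩ := S.exists_min_image id ⟨z, hmemS.2 ⟨hz, hz0, hzw⟩⟩
  obtain ⟨hmw, hm0, hmne⟩ := hmemS.1 hmS
  refine ⟨m, hmw, hmne, ⟨hm0, fun j hj0 hjm => ?_⟩, hmin z (hmemS.2 ⟨hz, hz0, hzw⟩)⟩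
  have hlen : (m.drop j).length < m.length := by rw [length_drop]; omega
  have hdrop : m.drop j ∈ S := hmemS.2
    ⟨(drop_suffix j m).trans hmw, ne_nil_of_length_pos (by rw [length_drop]; omega),
      ne_of_apply_ne length (by have := hmw.length_le; omega)⟩
  exact (hmin _ hdrop).lt_of_ne (ne_of_apply_ne length hlen.ne')

theorem le_of_isSuffix_of_longest_lyndon {w v z : List α} (hvL : Lyndon v) (hvw : v <:+ w)
    (hlongest : ∀ v' : List α, v' <:+ w → v' ≠ w → v' ≠ [] → Lyndon v' →
      v'.length ≤ v.length)
    (hz : z <:+ w) (hzw : z ≠ w) (hz0 : z ≠ []) : v ≤ z := by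
  obtain ⟨m, hmw, hmne, hmL, hmz⟩ := exists_lyndon_isSuffix_le hz hzw hz0
  have hmv : m <:+ v := suffix_of_suffix_length_le hmw hvw (hlongest m hmw hmne hmL.1 hmL)
  exact (hvL.le_of_isSuffix hmv hmL.1).trans hmz

end NC

theorem left_factor_of_std_factorization_isLyndon_general {α : Type*} [LinearOrder α]
    (w u v : List α) (hw : NC.Lyndon w)
    (hsplit : w = u ++ v) (hu : u ≠ []) (hvLyndon : NC.Lyndon v)
    (hlongest : ∀ v' : List α, v' <:+ w → v' ≠ w → v' ≠ [] → NC.Lyndon v' →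
      v'.length ≤ v.length) :
    NC.Lyndon u := by
  refine ⟨hu, fun i hi0 hiu => ?_⟩
  have hlt : u ++ v < u.drop i ++ v := by
    have h := hw.2 i hi0 (by rw [hsplit, List.length_append]; omega)
    rwa [hsplit, List.drop_append_of_le_length hiu.le] at h
  by_cases hpre : u.drop i <+: u
  · obtain ⟨t, ht⟩ := hpre
    have hlen : u.length - i + t.length = u.length := by simpa using congrArg List.length ht
    have ht0 : t ≠ [] := List.ne_nil_of_length_pos (by omega)
    have htv : t ++ v < v := by
      rwa [← List.append_lt_append_left_iff (u.drop i), ← List.append_assoc, ht]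
    have hvtv : v ≤ t ++ v := NC.le_of_isSuffix_of_longest_lyndon hvLyndon ⟨u, hsplit.symm⟩
      hlongest ⟨u.drop i, by rw [← List.append_assoc, ht, hsplit]⟩
      (ne_of_apply_ne List.length (by rw [hsplit, List.length_append, List.length_append]; omega))
      (List.append_ne_nil_of_left_ne_nil ht0 v)
    exact absurd htv (not_lt.2 hvtv)
  · exact List.lt_of_append_lt_append_of_not_isPrefix v v (by simp) hpre hlt

/-- If `w = uv` is the right standard factorization of a Lyndon word `w`
(`u, v` nonempty, `v` the longest proper right factor of `w` that is Lyndon),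
then `u` is also a Lyndon word. -/
theorem left_factor_of_std_factorization_isLyndon {α : Type*} [LinearOrder α]
    (w u v : List α) (hw : NC.Lyndon w)
    (hsplit : w = u ++ v) (hu : u ≠ []) (hv : v ≠ []) (hvLyndon : NC.Lyndon v)
    (hlongest : ∀ v' : List α, v' <:+ w → v' ≠ w → v' ≠ [] → NC.Lyndon v' →
      v'.length ≤ v.length) :
    NC.Lyndon u :=
  left_factor_of_std_factorization_isLyndon_general w u v hw hsplit hu hvLyndon hlongest
end

section
/- The map sending the word A B^{d_1−1} A B^{d_2−1} ⋯ A B^{d_ℓ−1} over the two-letter alphabet {A, B} (with A < B) to the word A_{d_1} A_{d_2} ⋯ A_{d_ℓ} over the alphabet {A_1, A_2, …} (with A_1 < A_2 < ⋯) restricts to a bijection between Lyndon words over {A,B} of length q that begin with A, and Lyndon words over {A_1, A_2, …} of weight q (where A_k has weight k); moreover this bijection preserves lexicographic order. -/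
open scoped BigOperators

/-- The word `A B^{d₁−1} A B^{d₂−1} ⋯ A B^{d_ℓ−1}` over `{A, B}` (with `A = false < B = true`)
associated to the word `A_{d₁} A_{d₂} ⋯ A_{d_ℓ}` over `{A₁, A₂, …}` (modelled as `ℕ+`). -/
def blocks (d : List ℕ+) : List Bool :=
  (d.map fun k => false :: List.replicate ((k : ℕ) - 1) true).flatten

/-- The weight (grade) of a word over `{A₁, A₂, …}`, where `A_k` has weight `k`. -/
def pweight (d : List ℕ+) : ℕ := (d.map fun k => (k : ℕ)).sum

/-!
A letter `A_k` becomes the block `A B^{k-1}`, and comparing `A B^{k-1}` with `A B^{l-1}` for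
`k < l` is decided by `A < B` at position `k`; hence `blocks` is strictly monotone for the
lexicographic order. A proper suffix of `blocks d` either starts inside a block, hence with `B`,
and then exceeds `blocks d` (which starts with `A`), or it is `blocks` of a proper suffix of `d`.
So `blocks d` is Lyndon exactly when `d` is. Every word is `B^n` followed by blocks, which gives
surjectivity onto words starting with `A`.
-/

@[simp] lemma blocks_nil : blocks [] = [] := rfl

@[simp] lemma blocks_cons (k : ℕ+) (d : List ℕ+) :
    blocks (k :: d) = false :: (List.replicate ((k : ℕ) - 1) true ++ blocks d) := by
  simp [blocks]

lemma blocks_append (d e : List ℕ+) : blocks (d ++ e) = blocks d ++ blocks e := by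
  simp [blocks]

@[simp] lemma pweight_nil : pweight [] = 0 := rfl

@[simp] lemma pweight_cons (k : ℕ+) (d : List ℕ+) : pweight (k :: d) = k + pweight d := by
  simp [pweight]

lemma pweight_append (d e : List ℕ+) : pweight (d ++ e) = pweight d + pweight e := by
  simp [pweight]

lemma pweight_pos {d : List ℕ+} (hd : d ≠ []) : 0 < pweight d := by
  obtain ⟨k, d, rfl⟩ := List.exists_cons_of_ne_nil hd
  simp [k.pos]

lemma length_blocks (d : List ℕ+) : (blocks d).length = pweight d := by
  induction d with
  | nil => rfl
  | cons k d ih =>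
    have := k.pos
    simp only [blocks_cons, pweight_cons, List.length_cons, List.length_append,
      List.length_replicate, ih]
    omega

lemma blocks_ne_nil {d : List ℕ+} (hd : d ≠ []) : blocks d ≠ [] := by
  obtain ⟨k, d, rfl⟩ := List.exists_cons_of_ne_nil hd
  simp

lemma head?_blocks {d : List ℕ+} (hd : d ≠ []) : (blocks d).head? = some false := by
  obtain ⟨k, d, rfl⟩ := List.exists_cons_of_ne_nil hd
  simp

lemma blocks_lt_true_cons (d : List ℕ+) (t : List Bool) : blocks d < true :: t := by
  cases d with
  | nil => exact List.nil_lt_cons _ _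
  | cons k d => exact List.Lex.rel (by decide)

lemma blocks_strictMono : StrictMono blocks := by
  intro d e (h : List.Lex _ d e)
  induction h with
  | nil => simp
  | cons _ ih => exact List.Lex.cons (List.append_left_lt ih)
  | @rel a d b e hab =>
    have hab : (a : ℕ) < b := hab
    obtain ⟨m, hm⟩ : ∃ m, (b : ℕ) - 1 = ((a : ℕ) - 1) + (m + 1) :=
      ⟨(b : ℕ) - a - 1, by have := a.pos; omega⟩
    rw [blocks_cons, blocks_cons, hm, List.replicate_add, List.replicate_succ]
    exact List.Lex.cons (by simpa using List.append_left_lt (blocks_lt_true_cons d _))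

lemma drop_blocks_pweight_take (d : List ℕ+) (j : ℕ) :
    (blocks d).drop (pweight (d.take j)) = blocks (d.drop j) := by
  calc (blocks d).drop (pweight (d.take j))
      = (blocks (d.take j) ++ blocks (d.drop j)).drop (blocks (d.take j)).length := by
        rw [← blocks_append, List.take_append_drop, length_blocks]
    _ = blocks (d.drop j) := List.drop_left ..

lemma drop_blocks_eq_true_cons_or_eq_pweight_take (d : List ℕ+) {i : ℕ} (hi : i < pweight d) :
    (∃ t, (blocks d).drop i = true :: t) ∨ ∃ j < d.length, i = pweight (d.take j) := by
  induction d generalizing i with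
  | nil => simp at hi
  | cons k d ih =>
    rcases i with _ | i
    · exact .inr ⟨0, by simp, by simp⟩
    by_cases hik : i < (k : ℕ) - 1
    · left
      obtain ⟨m, hm⟩ : ∃ m, (k : ℕ) - 1 - i = m + 1 := ⟨(k : ℕ) - 1 - i - 1, by omega⟩
      refine ⟨List.replicate m true ++ blocks d, ?_⟩
      rw [blocks_cons, List.drop_succ_cons,
        List.drop_append_of_le_length (by rw [List.length_replicate]; omega), List.drop_replicate,
        hm, List.replicate_succ, List.cons_append]
    · rw [pweight_cons] at hi
      have hdrop : (blocks (k :: d)).drop (i + 1) = (blocks d).drop (i + 1 - k) := by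
        rw [blocks_cons, List.drop_succ_cons, List.drop_append,
          List.drop_eq_nil_of_le (by rw [List.length_replicate]; omega), List.nil_append,
          List.length_replicate]
        have := k.pos
        congr 1
        omega
      rw [hdrop]
      rcases ih (i := i + 1 - k) (by omega) with h | ⟨j, hj, hij⟩
      · exact .inl h
      · exact .inr ⟨j + 1, by simpa using hj, by rw [List.take_succ_cons, pweight_cons]; omega⟩

theorem lyndon_blocks_iff {d : List ℕ+} : NC.Lyndon (blocks d) ↔ NC.Lyndon d := by
  have hlt (j : ℕ) : d < d.drop j ↔ blocks d < (blocks d).drop (pweight (d.take j)) := by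
    rw [drop_blocks_pweight_take]
    exact blocks_strictMono.lt_iff_lt.symm
  constructor
  · rintro ⟨hne, hlyn⟩
    have hd : d ≠ [] := by rintro rfl; exact hne rfl
    refine ⟨hd, fun j hj hjlen => (hlt j).2 (hlyn _ ?_ ?_)⟩
    · exact pweight_pos (by rw [Ne, List.take_eq_nil_iff, not_or]; exact ⟨hj.ne', hd⟩)
    · have hsplit := pweight_append (d.take j) (d.drop j)
      have hpos := pweight_pos (d := d.drop j) (by rw [Ne, List.drop_eq_nil_iff]; omega)
      rw [List.take_append_drop] at hsplit
      rw [length_blocks]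
      omega
  · rintro ⟨hd, hlyn⟩
    refine ⟨blocks_ne_nil hd, fun i hi hilen => ?_⟩
    rw [length_blocks] at hilen
    rcases drop_blocks_eq_true_cons_or_eq_pweight_take d hilen with ⟨t, ht⟩ | ⟨j, hj, rfl⟩
    · rw [ht]
      exact blocks_lt_true_cons d t
    · exact (hlt j).1 (hlyn j (Nat.pos_of_ne_zero (by rintro rfl; simp at hi)) hj)

lemma exists_eq_replicate_true_append_blocks (w : List Bool) :
    ∃ n d, w = List.replicate n true ++ blocks d := by
  induction w with
  | nil => exact ⟨0, [], rfl⟩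
  | cons b w ih =>
    obtain ⟨n, d, rfl⟩ := ih
    cases b
    · exact ⟨0, n.succPNat :: d, by simp⟩
    · exact ⟨n + 1, d, rfl⟩

lemma exists_blocks_eq {w : List Bool} (hw : w.head? ≠ some true) : ∃ d, blocks d = w := by
  obtain ⟨n, d, rfl⟩ := exists_eq_replicate_true_append_blocks w
  cases n with
  | zero => exact ⟨d, by simp⟩
  | succ n => simp [List.replicate_succ] at hw

/-- The map `A_{d₁}⋯A_{d_ℓ} ↦ A B^{d₁−1} ⋯ A B^{d_ℓ−1}` restricts to a
bijection between Lyndon words over `{A₁, A₂, …}` of weight `q` and Lyndon words over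
`{A, B}` of length `q` beginning with `A`, and this bijection preserves lexicographic
order. -/
theorem lyndon_blocks_bijection (q : ℕ) :
    (∀ d : List ℕ+, NC.Lyndon d → pweight d = q →
      NC.Lyndon (blocks d) ∧ (blocks d).length = q ∧ (blocks d).head? = some false) ∧
    (∀ d e : List ℕ+, NC.Lyndon d → NC.Lyndon e → pweight d = q → pweight e = q →
      blocks d = blocks e → d = e) ∧
    (∀ w : List Bool, NC.Lyndon w → w.length = q → w.head? = some false →
      ∃ d : List ℕ+, NC.Lyndon d ∧ pweight d = q ∧ blocks d = w) ∧
    (∀ d e : List ℕ+, NC.Lyndon d → NC.Lyndon e → pweight d = q → pweight e = q →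
      (d < e ↔ blocks d < blocks e)) := by
  refine ⟨fun d hd hq => ⟨lyndon_blocks_iff.2 hd, (length_blocks d).trans hq,
      head?_blocks hd.1⟩,
    fun d e _ _ _ _ h => blocks_strictMono.injective h,
    fun w hw hlen hhead => ?_,
    fun d e _ _ _ _ => blocks_strictMono.lt_iff_lt.symm⟩
  obtain ⟨d, rfl⟩ := exists_blocks_eq (w := w) (by simp [hhead])
  exact ⟨d, lyndon_blocks_iff.1 hw, (length_blocks d).symm.trans hlen, rfl⟩
end

section
/- Let P_k denote the shifted Legendre polynomials on [0,1], P_k(x) = (−1)^k ∑_{j=0}^k C(k,j) C(k+j,j) (−1)^j x^j. Then for indices d_1, …, d_ℓ ≥ 1, the iterated integral ∫_0^1 ∫_0^{x_1} ⋯ ∫_0^{x_{ℓ−1}} P_{d_1−1}(x_1) ⋯ P_{d_ℓ−1}(x_ℓ) dx_ℓ ⋯ dx_1 equals ∑_{(k_1,…,k_ℓ), 1 ≤ k_j ≤ d_j} ∏_{j=1}^{ℓ} [(−1)^{d_j+k_j} C(d_j−1, k_j−1) C(d_j+k_j−2, k_j−1)] / (∑_{i=j}^{ℓ} k_i). -/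
open scoped BigOperators

/-- The shifted Legendre polynomial on `[0,1]`:
`P_k(x) = (−1)^k ∑_{j=0}^k C(k,j) C(k+j,j) (−1)^j x^j`. -/
noncomputable def legP (k : ℕ) (x : ℝ) : ℝ :=
  (-1 : ℝ) ^ k *
    ∑ j ∈ Finset.range (k + 1),
      (Nat.choose k j : ℝ) * (Nat.choose (k + j) j : ℝ) * (-1 : ℝ) ^ j * x ^ j

/-- The iterated simplex integral
`∫_0^t ∫_0^{x₁} ⋯ P_{d₁−1}(x₁) P_{d₂−1}(x₂) ⋯ dx`. -/
noncomputable def legIter : List ℕ → ℝ → ℝ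
  | [], _ => 1
  | d :: ds, t => ∫ x in (0 : ℝ)..t, legP (d - 1) x * legIter ds x

/-!
Expanding `P_{d-1}` in monomials, the innermost integrals produce a polynomial in the upper
limit at every stage: if the inner `ℓ` integrals give `∑_k c_k t^{|k|}` with `|k| = ∑ (k_i + 1)`,
multiplying by `P_{d-1}(t) = ∑ a_m t^m` and integrating from `0` to `t` gives
`∑_{m,k} a_m c_k t^{m+1+|k|} / (m + 1 + |k|)`. The denominators accumulate into the tail sums of the formula,
and evaluating at `t = 1` gives the theorem.
-/

open Finset

noncomputable def legCoeff (d k : ℕ) : ℝ :=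
  (-1 : ℝ) ^ (d + (k + 1)) * (Nat.choose (d - 1) k : ℝ) * (Nat.choose (d + k - 1) k : ℝ)

lemma legP_eq_sum_legCoeff (n : ℕ) (x : ℝ) :
    legP n x = ∑ k ∈ range (n + 1), legCoeff (n + 1) k * x ^ k := by
  rw [legP, mul_sum]
  refine sum_congr rfl fun k _ => ?_
  simp only [legCoeff, Nat.add_sub_cancel, Nat.add_right_comm n 1 k, pow_add, pow_one]
  ring

lemma legP_pred_eq_sum_legCoeff {d : ℕ} (hd : 1 ≤ d) (x : ℝ) :
    legP (d - 1) x = ∑ k : Fin d, legCoeff d k * x ^ (k : ℕ) := by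
  obtain ⟨n, rfl⟩ := Nat.exists_eq_add_of_le' hd
  rw [Fin.sum_univ_eq_sum_range (fun k => legCoeff (n + 1) k * x ^ k), Nat.add_sub_cancel,
    legP_eq_sum_legCoeff]

lemma integral_sum_mul_pow {ι : Type*} (s : Finset ι) (c : ι → ℝ) (m : ι → ℕ) (t : ℝ) :
    ∫ x in (0 : ℝ)..t, ∑ i ∈ s, c i * x ^ m i =
      ∑ i ∈ s, c i * (t ^ (m i + 1) / (m i + 1)) := by
  rw [intervalIntegral.integral_finsetSum (f := fun i x => c i * x ^ m i) fun i _ =>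
    (continuous_const.mul (continuous_pow _)).intervalIntegrable _ _]
  refine sum_congr rfl fun i _ => ?_
  simp [integral_pow]

section SimplexCoeff

variable {ℓ : ℕ}

def multiDegree {d : Fin ℓ → ℕ} (k : ∀ j, Fin (d j)) : ℕ :=
  ∑ i, ((k i : ℕ) + 1)

noncomputable def simplexCoeff (d : Fin ℓ → ℕ) (k : ∀ j, Fin (d j)) : ℝ :=
  ∏ j, legCoeff (d j) (k j) / ((∑ i ∈ Ici j, ((k i : ℕ) + 1) : ℕ) : ℝ)

variable {d : Fin (ℓ + 1) → ℕ} (k₀ : Fin (d 0)) (k : ∀ j : Fin ℓ, Fin (d j.succ))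

lemma multiDegree_cons :
    multiDegree (Fin.cons k₀ k : ∀ j, Fin (d j)) = (k₀ + 1) + multiDegree k := by
  simp [multiDegree, Fin.sum_univ_succ]

lemma simplexCoeff_cons :
    simplexCoeff d (Fin.cons k₀ k) =
      legCoeff (d 0) k₀ / ((k₀ + 1 + multiDegree k : ℕ) : ℝ) *
        simplexCoeff (fun j : Fin ℓ => d j.succ) k := by
  rw [simplexCoeff, Fin.prod_univ_succ, show Ici (0 : Fin (ℓ + 1)) = univ from Ici_bot,
    ← multiDegree, multiDegree_cons]
  congr 1
  refine prod_congr rfl fun j _ => ?_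
  rw [← Fin.map_succEmb_Ici, sum_map]
  rfl

end SimplexCoeff

theorem legIter_ofFn_eq_sum {ℓ : ℕ} (d : Fin ℓ → ℕ) (hd : ∀ j, 1 ≤ d j) (t : ℝ) :
    legIter (List.ofFn d) t = ∑ k, simplexCoeff d k * t ^ multiDegree k := by
  induction ℓ generalizing t with
  | zero => simp [legIter, simplexCoeff, multiDegree]
  | succ ℓ ih =>
    have ih' := ih (fun j => d j.succ) fun j => hd j.succ
    calc legIter (List.ofFn d) t
        = ∫ x in (0 : ℝ)..t,
            legP (d 0 - 1) x * legIter (List.ofFn fun j : Fin ℓ => d j.succ) x := by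
          rw [List.ofFn_succ]; rfl
      _ = ∫ x in (0 : ℝ)..t, ∑ p : Fin (d 0) × (∀ j : Fin ℓ, Fin (d j.succ)),
            legCoeff (d 0) p.1 * simplexCoeff (fun j : Fin ℓ => d j.succ) p.2 *
              x ^ ((p.1 : ℕ) + multiDegree p.2) := by
          refine intervalIntegral.integral_congr fun x _ => ?_
          simp only [legP_pred_eq_sum_legCoeff (hd 0), ih', sum_mul_sum, Fintype.sum_prod_type,
            pow_add]
          exact Fintype.sum_congr _ _ fun _ => Fintype.sum_congr _ _ fun _ => by ring
      _ = ∑ p : Fin (d 0) × (∀ j : Fin ℓ, Fin (d j.succ)),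
            legCoeff (d 0) p.1 * simplexCoeff (fun j : Fin ℓ => d j.succ) p.2 *
              (t ^ ((p.1 : ℕ) + multiDegree p.2 + 1) / (((p.1 : ℕ) + multiDegree p.2 : ℕ) + 1)) :=
          integral_sum_mul_pow _ _ _ t
      _ = ∑ k, simplexCoeff d k * t ^ multiDegree k := by
          rw [← (Fin.consEquiv fun j => Fin (d j)).sum_comp]
          refine Fintype.sum_congr _ _ fun ⟨k₀, k⟩ => ?_
          change _ = simplexCoeff d (Fin.cons k₀ k) *
            t ^ multiDegree (Fin.cons k₀ k : ∀ j, Fin (d j))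
          rw [simplexCoeff_cons, multiDegree_cons, Nat.add_right_comm]
          push_cast
          ring

/-- For indices `d₁, …, d_ℓ ≥ 1`, the iterated simplex integral
`∫_0^1 ∫_0^{x₁} ⋯ ∫_0^{x_{ℓ−1}} P_{d₁−1}(x₁) ⋯ P_{d_ℓ−1}(x_ℓ) dx_ℓ ⋯ dx₁` equals
`∑_{1 ≤ k_j ≤ d_j} ∏_j (−1)^{d_j+k_j} C(d_j−1,k_j−1) C(d_j+k_j−2,k_j−1) / (∑_{i≥j} k_i)`.
(Here `k_j` is represented as `(k j : ℕ) + 1` with `k j : Fin (d j)`.) -/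
theorem legendre_iterated_integral_formula (ℓ : ℕ) (d : Fin ℓ → ℕ)
    (hd : ∀ j, 1 ≤ d j) :
    legIter (List.ofFn d) 1 =
      ∑ k : (∀ j : Fin ℓ, Fin (d j)), ∏ j : Fin ℓ,
        ((-1 : ℝ) ^ (d j + ((k j : ℕ) + 1)) *
            (Nat.choose (d j - 1) (k j : ℕ) : ℝ) *
            (Nat.choose (d j + (k j : ℕ) - 1) (k j : ℕ) : ℝ)) /
          ((∑ i ∈ Finset.Ici j, ((k i : ℕ) + 1) : ℕ) : ℝ) := by
  simp only [legIter_ofFn_eq_sum d hd 1, one_pow, mul_one]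
  rfl
end

section
/- Let P_k be the shifted Legendre polynomials on [0,1]. If one index d_j exceeds the sum of the remaining indices by at least 2, i.e., d_j ≥ 2 + ∑_{i≠j} d_i, then the iterated integral ∫_0^1 ∫_0^{x_1} ⋯ ∫_0^{x_{ℓ−1}} P_{d_1−1}(x_1) ⋯ P_{d_ℓ−1}(x_ℓ) dx_ℓ ⋯ dx_1 vanishes. -/
/-!
Split the indices as `A ++ d_j :: B`. The integrals over the variables after `x_j` produce a
polynomial `L(x_j)` of degree at most `∑ B`. Integrating by parts from the outside in, the
integrals over the variables before `x_j` become a weight `F(x_j)`, a polynomial of degree at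
most `∑ A` (one step turns `F` into `x ↦ ∫ₓ¹ P_{a-1} F`). The whole integral is then
`∫₀¹ P_{d_j-1} · F · L`, which vanishes because `deg (F L) < d_j - 1` and, by Rodrigues'
formula and repeated integration by parts, `P_k` is orthogonal to all polynomials of degree `< k`.
-/

open scoped BigOperators

open Polynomial

namespace Polynomial

section Antideriv

variable {K : Type*} [Field K]

noncomputable def antideriv (p : K[X]) : K[X] :=
  p.sum fun n a => C (a / (n + 1)) * X ^ (n + 1)

@[simp]
theorem derivative_antideriv [CharZero K] (p : K[X]) : derivative (antideriv p) = p := by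
  conv_rhs => rw [← p.sum_C_mul_X_pow_eq]
  simp only [antideriv, Polynomial.sum, map_sum, derivative_C_mul_X_pow]
  refine Finset.sum_congr rfl fun n _ => ?_
  rw [Nat.add_sub_cancel, Nat.cast_add_one, div_mul_cancel₀ _ (Nat.cast_add_one_ne_zero n)]

@[simp]
theorem antideriv_eval_zero (p : K[X]) : (antideriv p).eval 0 = 0 := by
  simp [antideriv, Polynomial.sum, eval_finsetSum]

theorem natDegree_antideriv_le (p : K[X]) : (antideriv p).natDegree ≤ p.natDegree + 1 :=
  natDegree_sum_le_of_forall_le _ _ fun n hn =>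
    (natDegree_C_mul_X_pow_le _ _).trans (Nat.add_le_add_right (le_natDegree_of_mem_supp n hn) 1)

end Antideriv

theorem eval_iterate_derivative_pow_eq_zero {R : Type*} [CommRing R] {p : R[X]} {x : R}
    (hx : p.IsRoot x) {i k : ℕ} (hi : i < k) : (derivative^[i] (p ^ k)).eval x = 0 :=
  eval_eq_zero_of_dvd_of_eval_eq_zero
    ((dvd_pow_self p (Nat.sub_ne_zero_of_lt hi)).trans
      (pow_sub_dvd_iterate_derivative_pow p k i)) hx

theorem integral_eval_eq_antideriv (p : ℝ[X]) (t : ℝ) :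
    ∫ x in (0 : ℝ)..t, p.eval x = (antideriv p).eval t := by
  simpa using intervalIntegral.integral_eq_sub_of_hasDerivAt (fun x _ => (antideriv p).hasDerivAt x)
    ((derivative (antideriv p)).continuous.intervalIntegrable 0 t)

theorem integral_eval_mul_derivative (u v : ℝ[X]) (a b : ℝ) :
    ∫ x in a..b, u.eval x * (derivative v).eval x =
      u.eval b * v.eval b - u.eval a * v.eval a - ∫ x in a..b, (derivative u).eval x * v.eval x :=
  intervalIntegral.integral_mul_deriv_eq_deriv_mul (fun x _ => u.hasDerivAt x)
    (fun x _ => v.hasDerivAt x) ((derivative u).continuous.intervalIntegrable _ _)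
    ((derivative v).continuous.intervalIntegrable _ _)

theorem integral_eval_mul_antideriv (p q : ℝ[X]) :
    ∫ x in (0 : ℝ)..1, p.eval x * (antideriv q).eval x =
      ∫ x in (0 : ℝ)..1, (C ((antideriv p).eval 1) - antideriv p).eval x * q.eval x := by
  have h := integral_eval_mul_derivative (C ((antideriv p).eval 1) - antideriv p) (antideriv q) 0 1
  simp only [derivative_antideriv, derivative_sub, derivative_C, zero_sub, eval_sub, eval_C,
    sub_self, zero_mul, antideriv_eval_zero, mul_zero, eval_neg, neg_mul,
    intervalIntegral.integral_neg, sub_neg_eq_add, zero_add] at h ⊢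
  exact h.symm

theorem integral_iterate_derivative_mul_eq_zero {p q : ℝ[X]} {a b : ℝ} {n : ℕ}
    (hp : ∀ i < n, (derivative^[i] p).eval a = 0 ∧ (derivative^[i] p).eval b = 0)
    (hq : q.natDegree < n) :
    ∫ x in a..b, (derivative^[n] p).eval x * q.eval x = 0 := by
  induction n generalizing q with
  | zero => exact absurd hq (Nat.not_lt_zero _)
  | succ n ih =>
    obtain ⟨ha, hb⟩ := hp n n.lt_succ_self
    have hq' : ∫ x in a..b, (derivative^[n] p).eval x * (derivative q).eval x = 0 := by
      by_cases hq0 : q.natDegree = 0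
      · simp [derivative_of_natDegree_zero hq0]
      · exact ih (fun i hi => hp i (hi.trans n.lt_succ_self))
          ((natDegree_derivative_lt hq0).trans_le (Nat.lt_succ_iff.mp hq))
    have hparts := integral_eval_mul_derivative (derivative^[n] p) q a b
    rw [hq', ha, hb] at hparts
    rw [Function.iterate_succ_apply']
    linarith

end Polynomial

noncomputable def legPoly (k : ℕ) : ℝ[X] :=
  C ((-1) ^ k) * (shiftedLegendre k).map (Int.castRingHom ℝ)

theorem eval_legPoly (k : ℕ) (x : ℝ) : (legPoly k).eval x = legP k x := by
  rw [legPoly, legP, eval_mul, eval_C, eval_map, shiftedLegendre, eval₂_finsetSum]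
  congr 1
  refine Finset.sum_congr rfl fun j _ => ?_
  rw [eval₂_mul, eval₂_C, eval₂_X_pow, Nat.choose_symm_add]
  simp only [eq_intCast]
  push_cast
  ring

theorem natDegree_legPoly_le (k : ℕ) : (legPoly k).natDegree ≤ k :=
  (natDegree_C_mul_le _ _).trans (natDegree_map_le.trans (natDegree_shiftedLegendre k).le)

theorem legPoly_eq_iterate_derivative (k : ℕ) :
    legPoly k = C ((-1 : ℝ) ^ k / k.factorial) * derivative^[k] ((X * (1 - X)) ^ k) := by
  have h := congrArg (Polynomial.map (Int.castRingHom ℝ)) (factorial_mul_shiftedLegendre_eq k)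
  rw [Polynomial.map_mul, ← iterate_derivative_map] at h
  simp only [Polynomial.map_mul, Polynomial.map_natCast, Polynomial.map_pow, Polynomial.map_sub,
    Polynomial.map_one, map_X] at h
  rw [legPoly, mul_pow, ← h, ← mul_assoc, ← C_eq_natCast, ← C_mul,
    div_mul_cancel₀ _ (by positivity)]

theorem integral_legP_mul_eq_zero {k : ℕ} {q : ℝ[X]} (hq : q.natDegree < k) :
    ∫ x in (0 : ℝ)..1, legP k x * q.eval x = 0 := by
  have hroot0 : (X * (1 - X) : ℝ[X]).IsRoot 0 := by simp
  have hroot1 : (X * (1 - X) : ℝ[X]).IsRoot 1 := by simp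
  simp_rw [← eval_legPoly, legPoly_eq_iterate_derivative, eval_mul, eval_C, mul_assoc,
    intervalIntegral.integral_const_mul]
  rw [integral_iterate_derivative_mul_eq_zero (fun i hi => ⟨eval_iterate_derivative_pow_eq_zero
    hroot0 hi, eval_iterate_derivative_pow_eq_zero hroot1 hi⟩) hq, mul_zero]

noncomputable def iterPoly (ds : List ℕ) (r : ℝ[X]) : ℝ[X] :=
  ds.foldr (fun d p => antideriv (legPoly (d - 1) * p)) r

@[simp]
theorem iterPoly_nil (r : ℝ[X]) : iterPoly [] r = r := rfl

theorem iterPoly_cons (d : ℕ) (ds : List ℕ) (r : ℝ[X]) :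
    iterPoly (d :: ds) r = antideriv (legPoly (d - 1) * iterPoly ds r) := rfl

theorem iterPoly_append (A B : List ℕ) (r : ℝ[X]) :
    iterPoly (A ++ B) r = iterPoly A (iterPoly B r) :=
  List.foldr_append

theorem legIter_eq_eval_iterPoly (ds : List ℕ) (t : ℝ) :
    legIter ds t = (iterPoly ds 1).eval t := by
  induction ds generalizing t with
  | nil => simp [legIter]
  | cons d ds ih =>
    rw [legIter, iterPoly_cons, ← integral_eval_eq_antideriv]
    simp only [eval_mul, eval_legPoly, ih]

theorem natDegree_antideriv_legPoly_mul_le {d : ℕ} (hd : 1 ≤ d) (p : ℝ[X]) :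
    (antideriv (legPoly (d - 1) * p)).natDegree ≤ d + p.natDegree := by
  have hmul : (legPoly (d - 1) * p).natDegree ≤ d - 1 + p.natDegree :=
    natDegree_mul_le.trans (Nat.add_le_add_right (natDegree_legPoly_le (d - 1)) _)
  have := natDegree_antideriv_le (legPoly (d - 1) * p)
  omega

theorem natDegree_iterPoly_le {ds : List ℕ} (hds : ∀ d ∈ ds, 1 ≤ d) (r : ℝ[X]) :
    (iterPoly ds r).natDegree ≤ ds.sum + r.natDegree := by
  induction ds with
  | nil => simp
  | cons d ds ih =>
    have hih := ih fun a ha => hds a (List.mem_cons_of_mem d ha)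
    rw [iterPoly_cons, List.sum_cons]
    refine (natDegree_antideriv_legPoly_mul_le (hds d List.mem_cons_self) _).trans ?_
    omega

theorem exists_eval_iterPoly_antideriv_eq_integral {A : List ℕ} (hA : ∀ a ∈ A, 1 ≤ a) :
    ∃ F : ℝ[X], F.natDegree ≤ A.sum ∧
      ∀ q, (iterPoly A (antideriv q)).eval 1 = ∫ x in (0 : ℝ)..1, F.eval x * q.eval x := by
  induction A using List.reverseRecOn with
  | nil => exact ⟨1, by simp, fun q => by simp [integral_eval_eq_antideriv]⟩
  | append_singleton A a ih =>
    obtain ⟨F, hFdeg, hF⟩ := ih fun b hb => hA b (List.mem_append_left _ hb)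
    have ha : 1 ≤ a := hA a (List.mem_append_right _ (List.mem_singleton_self a))
    refine ⟨C ((antideriv (legPoly (a - 1) * F)).eval 1) - antideriv (legPoly (a - 1) * F), ?_,
      fun q => ?_⟩
    · have := natDegree_antideriv_legPoly_mul_le ha F
      refine (natDegree_sub_le _ _).trans ?_
      rw [natDegree_C, List.sum_append, List.sum_singleton]
      omega
    · rw [iterPoly_append, iterPoly_cons, iterPoly_nil, hF,
        ← integral_eval_mul_antideriv]
      refine intervalIntegral.integral_congr fun x _ => ?_
      simp only [eval_mul]
      ring

theorem legIter_append_cons_eq_zero {A B : List ℕ} {b : ℕ} (hA : ∀ a ∈ A, 1 ≤ a)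
    (hB : ∀ a ∈ B, 1 ≤ a) (hb : A.sum + B.sum + 2 ≤ b) : legIter (A ++ b :: B) 1 = 0 := by
  obtain ⟨F, hFdeg, hF⟩ := exists_eval_iterPoly_antideriv_eq_integral hA
  have hdeg : (F * iterPoly B 1).natDegree < b - 1 := by
    have := natDegree_mul_le.trans (Nat.add_le_add hFdeg (natDegree_iterPoly_le hB 1))
    simp only [natDegree_one, add_zero] at this
    omega
  rw [legIter_eq_eval_iterPoly, iterPoly_append, iterPoly_cons, hF]
  refine (intervalIntegral.integral_congr fun x _ => ?_).trans (integral_legP_mul_eq_zero hdeg)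
  simp only [eval_mul, eval_legPoly]
  ring

/-- If one index `d_j` exceeds the sum of the remaining indices by at
least 2, then the iterated simplex integral of `P_{d₁−1}(x₁) ⋯ P_{d_ℓ−1}(x_ℓ)` vanishes. -/
theorem legendre_iterated_integral_vanishes (ℓ : ℕ) (d : Fin ℓ → ℕ)
    (hd : ∀ j, 1 ≤ d j)
    (hbig : ∃ j : Fin ℓ, 2 + ∑ i ∈ Finset.univ.erase j, d i ≤ d j) :
    legIter (List.ofFn d) 1 = 0 := by
  obtain ⟨j, hj⟩ := hbig
  set L := List.ofFn d
  have hsplit : L = L.take j ++ d j :: L.drop (j + 1) := by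
    have hj : (j : ℕ) < L.length := by simp [L]
    rw [← List.getElem_ofFn hj, ← List.drop_eq_getElem_cons, List.take_append_drop]
  have hpos : ∀ a ∈ L, 1 ≤ a := by simpa [L, List.mem_ofFn] using hd
  have hsum : L.sum = d j + ∑ i ∈ Finset.univ.erase j, d i := by
    rw [List.sum_ofFn, Finset.add_sum_erase _ _ (Finset.mem_univ j)]
  rw [hsplit] at hpos hsum ⊢
  simp only [List.sum_append, List.sum_cons] at hsum
  exact legIter_append_cons_eq_zero (fun a ha => hpos a (List.mem_append_left _ ha))
    (fun a ha => hpos a (List.mem_append_right _ (List.mem_cons_of_mem _ ha))) (by omega)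
end

section
/- Every Lyndon word w of grade q < p over the alphabet {A_1, …, A_p} (grade(A_k) = k) other than the single letter A_1 is a proper right factor of a Lyndon word of grade exactly p, namely of A_1^{p−q} w (the word obtained by prepending p−q copies of A_1 to w). -/
open scoped BigOperators

/-!
Since `w ≠ A₁` is Lyndon, not all of its letters are `A₁`, and prepending `A₁` to a word with a
letter `> A₁` makes it strictly smaller; so `A₁ⁿ w` is strictly decreasing in `n`. A proper right
factor of `A₁ʳ w` is then either `A₁ʳ⁻ⁱ w > A₁ʳ w`, or a proper right factor of `w`, which exceeds
`w ≥ A₁ʳ w`.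
-/

namespace NC

theorem wgrade_append {α : Type*} (grade : α → ℕ) (u v : List α) :
    wgrade grade (u ++ v) = wgrade grade u + wgrade grade v := by
  simp [wgrade]

theorem wgrade_replicate {α : Type*} (grade : α → ℕ) (n : ℕ) (a : α) :
    wgrade grade (List.replicate n a) = n * grade a := by
  simp [wgrade]

variable {α : Type*} [LinearOrder α]

theorem eq_one_of_lyndon_replicate {a : α} {n : ℕ} (h : Lyndon (List.replicate n a)) : n = 1 := by
  obtain ⟨hne, hlt⟩ := h
  have hpos : 0 < n := List.length_pos_iff.2 hne |>.trans_eq (List.length_replicate ..)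
  by_contra hn1
  have hprefix : (List.replicate n a).drop 1 <+: List.replicate n a := by
    rw [List.drop_replicate]
    exact List.prefix_iff_eq_take.2 (by simp [List.take_replicate])
  exact absurd (hlt 1 one_pos (by simp only [List.length_replicate]; omega)) (List.not_lt.2 hprefix.le)

theorem Lyndon.exists_lt_mem {a : α} {w : List α} (hw : Lyndon w) (hmin : ∀ x ∈ w, a ≤ x)
    (hne : w ≠ [a]) : ∃ x ∈ w, a < x := by
  by_contra! hmax
  have hconst : w = List.replicate w.length a :=
    List.eq_replicate_iff.2 ⟨rfl, fun x hx => le_antisymm (hmax x hx) (hmin x hx)⟩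
  rw [hconst] at hw hne
  exact hne (by rw [eq_one_of_lyndon_replicate hw]; rfl)

theorem cons_lt_self {a : α} {w : List α} (hmin : ∀ x ∈ w, a ≤ x) (hbig : ∃ x ∈ w, a < x) :
    a :: w < w := by
  induction w with
  | nil => simp at hbig
  | cons b t ih =>
    rcases (hmin b List.mem_cons_self).lt_or_eq with hab | rfl
    · exact List.Lex.rel hab
    · refine List.Lex.cons (ih (fun x hx => hmin x (List.mem_cons_of_mem _ hx)) ?_)
      simpa using hbig

theorem strictAnti_replicate_append {a : α} {w : List α} (hmin : ∀ x ∈ w, a ≤ x)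
    (hbig : ∃ x ∈ w, a < x) : StrictAnti fun n => List.replicate n a ++ w := by
  refine strictAnti_nat_of_succ_lt fun n => ?_
  have hmin' : ∀ x ∈ List.replicate n a ++ w, a ≤ x := by
    simp only [List.mem_append, List.mem_replicate]
    rintro x (⟨-, rfl⟩ | hx)
    exacts [le_rfl, hmin x hx]
  obtain ⟨x, hx, hax⟩ := hbig
  simpa [List.replicate_succ] using cons_lt_self hmin' ⟨x, List.mem_append_right _ hx, hax⟩

theorem Lyndon.replicate_append {a : α} {w : List α} (hw : Lyndon w) (hmin : ∀ x ∈ w, a ≤ x)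
    (hne : w ≠ [a]) (n : ℕ) : Lyndon (List.replicate n a ++ w) := by
  have hanti := strictAnti_replicate_append hmin (hw.exists_lt_mem hmin hne)
  refine ⟨by simp [hw.1], fun i hi hilen => ?_⟩
  rw [List.drop_append, List.drop_replicate, List.length_replicate]
  rcases le_or_gt i n with hin | hni
  · simpa [Nat.sub_eq_zero_of_le hin] using hanti (Nat.sub_lt_self hi hin)
  · rw [Nat.sub_eq_zero_of_le hni.le]
    calc List.replicate n a ++ w ≤ List.replicate 0 a ++ w := hanti.antitone n.zero_le
      _ = w := rfl
      _ < w.drop (i - n) := hw.2 _ (by omega) (by simp only [List.length_append, List.length_replicate] at hilen; omega)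

end NC

/-- Over the alphabet `{A₁, A₂, …}` (modelled as `ℕ+`, `grade(A_k) = k`),
every Lyndon word `w ≠ A₁` of grade `q < p` is a proper right factor of a Lyndon word of
grade exactly `p`, namely of `A₁^{p−q} w`. -/
theorem lyndon_prepend_a1 (p q : ℕ) (w : List ℕ+)
    (hw : NC.Lyndon w) (hne : w ≠ [1])
    (hgrade : NC.wgrade (fun k => (k : ℕ)) w = q) (hqp : q < p) :
    NC.Lyndon (List.replicate (p - q) (1 : ℕ+) ++ w) ∧
    NC.wgrade (fun k => (k : ℕ)) (List.replicate (p - q) (1 : ℕ+) ++ w) = p ∧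
    w <:+ List.replicate (p - q) (1 : ℕ+) ++ w ∧
    w ≠ List.replicate (p - q) (1 : ℕ+) ++ w := by
  refine ⟨hw.replicate_append (fun _ _ => one_le) hne _, ?_, List.suffix_append _ _, ?_⟩
  · -- The coercion `List ℕ+ → List ℕ` in the statement elaborates as a list-monad lift.
    have hcoe (l : List ℕ+) : (do let a ← l; pure (a : ℕ) : List ℕ) = l.map (↑) :=
      List.flatMap_pure_eq_map _ l
    rw [hcoe] at hgrade ⊢
    rw [List.map_append, NC.wgrade_append, hgrade, List.map_replicate, NC.wgrade_replicate]
    simp only [PNat.one_coe, mul_one]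
    omega
  · simpa using Nat.sub_ne_zero_of_lt hqp
end
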